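/- Let i ∈ {0,1} and suppose π : (0,1) → (0,∞) satisfies π(p) ≤ C̄ · ln(1/|p−i|) for all p in some neighborhood of i in (0,1), for some constant C̄ > 0. Let ψ : [0,1] → ℝ be continuous and continuously differentiable on (0,1). If the limit lim_{p→i} v(p) π(p) ψ'(p) exists in ℝ, then it equals 0. -/

import Mathlib

open MeasureTheory Set Filter Topology Asymptotics

/-- The infinitesimal generator of the forward jump-diffusion process (Eq. (7) of the paper). -/
noncomputable def fwdGen (lam : ℝ) (v mu w0 : ℝ → ℝ) (phi : ℝ → ℝ) (p : ℝ) : ℝ :=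
  1 / 2 * v p * deriv (deriv phi) p + mu p * deriv phi p
    + lam * w0 p * (phi 0 - phi p) + lam * (1 - w0 p) * (phi 1 - phi p)

/-- Standing assumptions on the coefficients (Assumption 2.1 of the paper). -/
structure ModelAssumptions (lam : ℝ) (v mu w0 : ℝ → ℝ) : Prop where
  lam_nonneg : 0 ≤ lam
  analytic : ∃ U : Set ℝ, IsOpen U ∧ Icc (0 : ℝ) 1 ⊆ U ∧
    AnalyticOnNhd ℝ v U ∧ AnalyticOnNhd ℝ mu U ∧ AnalyticOnNhd ℝ w0 U
  w0_mem : ∀ p ∈ Icc (0 : ℝ) 1, w0 p ∈ Icc (0 : ℝ) 1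
  mu_zero_pos : 0 < mu 0
  mu_one_neg : mu 1 < 0
  v_zero : v 0 = 0
  v_one : v 1 = 0
  v_pos : ∀ p ∈ Ioo (0 : ℝ) 1, 0 < v p
  deriv_v_zero_pos : 0 < deriv v 0
  deriv_v_one_neg : deriv v 1 < 0

/-- `pi` is a smooth, integrable, normalized, positive solution of the stationary
boundary value problem (Eq. (14) of the paper). -/
structure StationaryDensity (lam : ℝ) (v mu w0 : ℝ → ℝ) (pi : ℝ → ℝ) : Prop where
  contDiffOn : ContDiffOn ℝ 2 pi (Ioo (0 : ℝ) 1)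
  pos : ∀ p ∈ Ioo (0 : ℝ) 1, 0 < pi p
  integrableOn : IntegrableOn pi (Ioo (0 : ℝ) 1)
  total_mass : (∫ p in Ioo (0 : ℝ) 1, pi p) = 1
  ode : ∀ p ∈ Ioo (0 : ℝ) 1,
    deriv (deriv fun q => 1 / 2 * v q * pi q) p - deriv (fun q => mu q * pi q) p
      - lam * pi p = 0
  bc_zero : Tendsto (fun p => mu p * pi p - deriv (fun q => 1 / 2 * v q * pi q) p)
    (𝓝[Ioo (0 : ℝ) 1] 0) (𝓝 (lam * ∫ p in Ioo (0 : ℝ) 1, w0 p * pi p))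
  bc_one : Tendsto (fun p => mu p * pi p - deriv (fun q => 1 / 2 * v q * pi q) p)
    (𝓝[Ioo (0 : ℝ) 1] 1) (𝓝 (-(lam * ∫ p in Ioo (0 : ℝ) 1, (1 - w0 p) * pi p)))
  vpi_zero : Tendsto (fun p => v p * pi p) (𝓝[Ioo (0 : ℝ) 1] 0) (𝓝 0)
  vpi_one : Tendsto (fun p => v p * pi p) (𝓝[Ioo (0 : ℝ) 1] 1) (𝓝 0)

/-- The drift of the diffusive motion of the time-reversed process:
`μ̃(p) = −μ(p) + (vπ)'(p)/π(p)`. -/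
noncomputable def bwdDrift (v mu pi : ℝ → ℝ) (p : ℝ) : ℝ :=
  -mu p + deriv (fun q => v q * pi q) p / pi p

/-- The scale density of the backward diffusive motion:
`S̃'(p) = exp(−∫_{1/2}^p 2μ̃(z)/v(z) dz)`. -/
noncomputable def bwdScaleDensity (v mu pi : ℝ → ℝ) (p : ℝ) : ℝ :=
  Real.exp (-∫ z in (1 / 2 : ℝ)..p, 2 * bwdDrift v mu pi z / v z)

/-- The scale function of the backward diffusive motion: `S̃(p) = ∫_{1/2}^p S̃'(x) dx`. -/
noncomputable def bwdScale (v mu pi : ℝ → ℝ) (p : ℝ) : ℝ :=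
  ∫ x in (1 / 2 : ℝ)..p, bwdScaleDensity v mu pi x

/-- The speed density of the backward diffusive motion: `m̃(p) = 1/(v(p)S̃'(p))`. -/
noncomputable def bwdSpeedDensity (v mu pi : ℝ → ℝ) (p : ℝ) : ℝ :=
  1 / (v p * bwdScaleDensity v mu pi p)

/-!
Near an endpoint `i` the function `v` vanishes to first order, so `v π ≤ M d log(1/d)` with
`d = |p - i|`. If `v π ψ' → L ≠ 0`, then `|ψ'| ≥ c / (d log(1/d))` near `i`, with `ψ'` of
constant sign. Since `log(log(1/d))` is an antiderivative of `-1 / (d log(1/d))` that blows up as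
`d → 0`, `ψ` would diverge at `i`, contradicting continuity of `ψ` on `[0, 1]`.
-/

namespace Real

lemma hasDerivAt_log_neg_log {x : ℝ} (hx0 : 0 < x) (hx1 : x < 1) :
    HasDerivAt (fun y => log (-log y)) (-1 / (x * -log x)) x := by
  have hlog : log x < 0 := log_neg hx0 hx1
  convert ((hasDerivAt_log hx0.ne').fun_neg).log (neg_ne_zero.2 hlog.ne) using 1
  field_simp

lemma tendsto_log_neg_log_nhdsGT_zero : Tendsto (fun x => log (-log x)) (𝓝[>] 0) atTop :=
  tendsto_log_atTop.comp (tendsto_neg_atBot_atTop.comp tendsto_log_nhdsGT_zero)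

end Real

open Real

lemma tendsto_const_sub_nhdsGT_zero (a : ℝ) : Tendsto (a - ·) (𝓝[>] 0) (𝓝[<] a) :=
  tendsto_nhdsWithin_of_tendsto_nhds_of_eventually_within _
    (((continuous_sub_left a).tendsto' 0 a (sub_zero a)).mono_left nhdsWithin_le_nhds)
    (eventually_nhdsWithin_of_forall fun _ hx => sub_lt_self a hx)

lemma tendsto_atBot_of_div_mul_neg_log_le_deriv {f : ℝ → ℝ} {c : ℝ} (hc : 0 < c)
    (hf' : ∀ᶠ x in 𝓝[>] 0, c / (x * -log x) ≤ deriv f x) :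
    Tendsto f (𝓝[>] 0) atBot := by
  obtain ⟨δ, hδ, hδsub⟩ :=
    mem_nhdsGT_iff_exists_Ioo_subset.1 (hf'.and (Ioo_mem_nhdsGT one_pos))
  set h : ℝ → ℝ := fun x => f x + c * log (-log x)
  have hderiv : ∀ x ∈ Ioo 0 δ, HasDerivAt h (deriv f x - c / (x * -log x)) x := by
    intro x hx
    obtain ⟨hbound, hx0, hx1⟩ := hδsub hx
    have hpos : 0 < c / (x * -log x) := div_pos hc (mul_pos hx0 (neg_pos.2 (log_neg hx0 hx1)))
    have hf : DifferentiableAt ℝ f x := differentiableAt_of_deriv_ne_zero (by linarith)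
    exact (hf.hasDerivAt.fun_add ((hasDerivAt_log_neg_log hx0 hx1).const_mul c)).congr_deriv
      (by ring)
  have hmono : MonotoneOn h (Ioo 0 δ) := by
    refine monotoneOn_of_hasDerivWithinAt_nonneg (convex_Ioo 0 δ)
      (f' := fun x => deriv f x - c / (x * -log x))
      (fun x hx => (hderiv x hx).continuousAt.continuousWithinAt) ?_ ?_
    · simpa only [interior_Ioo] using fun x hx => (hderiv x hx).hasDerivWithinAt
    · simpa only [interior_Ioo, sub_nonneg] using fun x hx => (hδsub hx).1
  have hb : δ / 2 ∈ Ioo 0 δ := ⟨half_pos hδ, half_lt_self hδ⟩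
  have hupper : ∀ᶠ x in 𝓝[>] 0, f x ≤ h (δ / 2) - c * log (-log x) := by
    filter_upwards [Ioo_mem_nhdsGT hb.1] with x hx
    have := hmono ⟨hx.1, hx.2.trans hb.2⟩ hb hx.2.le
    linarith
  refine tendsto_atBot_mono' _ hupper (tendsto_atBot_add_const_left _ _ ?_)
  exact tendsto_neg_atTop_atBot.comp (tendsto_log_neg_log_nhdsGT_zero.const_mul_atTop hc)

section LimitOfWeightedDerivative

variable {w f : ℝ → ℝ} {M a L : ℝ}

lemma nonpos_of_tendsto_mul_deriv_nhdsGT_zero (hM : 0 < M)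
    (hw_pos : ∀ᶠ x in 𝓝[>] 0, 0 < w x) (hw_le : ∀ᶠ x in 𝓝[>] 0, w x ≤ M * (x * -log x))
    (hf : Tendsto f (𝓝[>] 0) (𝓝 a))
    (hL : Tendsto (fun x => w x * deriv f x) (𝓝[>] 0) (𝓝 L)) : L ≤ 0 := by
  by_contra! hL0
  refine not_tendsto_nhds_of_tendsto_atBot
    (tendsto_atBot_of_div_mul_neg_log_le_deriv (c := L / 2 / M) (by positivity) ?_) a hf
  filter_upwards [hL.eventually_const_lt (half_lt_self hL0), hw_pos, hw_le]
    with x hLx hwx hwM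
  calc L / 2 / M / (x * -log x) = L / 2 / (M * (x * -log x)) := div_div _ _ _
    _ ≤ L / 2 / w x := div_le_div_of_nonneg_left (by positivity) hwx hwM
    _ ≤ deriv f x := (div_le_iff₀ hwx).2 (by linarith)

lemma eq_zero_of_tendsto_mul_deriv_nhdsGT_zero (hM : 0 < M)
    (hw_pos : ∀ᶠ x in 𝓝[>] 0, 0 < w x) (hw_le : ∀ᶠ x in 𝓝[>] 0, w x ≤ M * (x * -log x))
    (hf : Tendsto f (𝓝[>] 0) (𝓝 a))
    (hL : Tendsto (fun x => w x * deriv f x) (𝓝[>] 0) (𝓝 L)) : L = 0 := by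
  have hL_neg : Tendsto (fun x => w x * deriv (fun y => -f y) x) (𝓝[>] 0) (𝓝 (-L)) := by
    simpa only [deriv.fun_neg, mul_neg] using hL.neg
  exact le_antisymm (nonpos_of_tendsto_mul_deriv_nhdsGT_zero hM hw_pos hw_le hf hL)
    (neg_nonpos.1 (nonpos_of_tendsto_mul_deriv_nhdsGT_zero hM hw_pos hw_le hf.neg hL_neg))

lemma eq_zero_of_tendsto_mul_deriv_nhdsLT {b : ℝ} (hM : 0 < M)
    (hw_pos : ∀ᶠ x in 𝓝[<] b, 0 < w x)
    (hw_le : ∀ᶠ x in 𝓝[<] b, w x ≤ M * ((b - x) * -log (b - x)))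
    (hf : Tendsto f (𝓝[<] b) (𝓝 a))
    (hL : Tendsto (fun x => w x * deriv f x) (𝓝[<] b) (𝓝 L)) : L = 0 := by
  have hσ := tendsto_const_sub_nhdsGT_zero b
  have hL' : Tendsto (fun x => w (b - x) * deriv (fun y => f (b - y)) x) (𝓝[>] 0) (𝓝 (-L)) := by
    simpa only [deriv_comp_const_sub, mul_neg, Function.comp_def] using (hL.comp hσ).neg
  refine neg_eq_zero.1 (eq_zero_of_tendsto_mul_deriv_nhdsGT_zero hM (w := fun x => w (b - x))
    (hσ.eventually hw_pos) ?_ (hf.comp hσ) hL')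
  simpa only [sub_sub_cancel] using hσ.eventually hw_le

end LimitOfWeightedDerivative

theorem stmt_16_general (lam : ℝ) (v mu w0 : ℝ → ℝ)
    (H : ModelAssumptions lam v mu w0)
    (i : ℝ) (hi : i = 0 ∨ i = 1)
    (pi : ℝ → ℝ) (hpos : ∀ p ∈ Ioo (0 : ℝ) 1, 0 < pi p)
    (Cb : ℝ) (hCb : 0 < Cb)
    (hbound : ∀ᶠ p in 𝓝[Ioo (0 : ℝ) 1] i, pi p ≤ Cb * Real.log (1 / |p - i|))
    (psi : ℝ → ℝ)
    (hpsi_cont : ContinuousOn psi (Icc (0 : ℝ) 1))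
    (L : ℝ)
    (hlim : Tendsto (fun p => v p * pi p * deriv psi p) (𝓝[Ioo (0 : ℝ) 1] i) (𝓝 L)) :
    L = 0 := by
  obtain ⟨U, -, hIccU, hv, -, -⟩ := H.analytic
  have hi_mem : i ∈ Icc (0 : ℝ) 1 := by rcases hi with rfl | rfl <;> simp
  have hvi : v i = 0 := by rcases hi with rfl | rfl; exacts [H.v_zero, H.v_one]
  obtain ⟨K, hK, hvK⟩ := (hv i (hIccU hi_mem)).differentiableAt.isBigO_sub.exists_pos
  have hw_pos : ∀ᶠ p in 𝓝[Ioo (0 : ℝ) 1] i, 0 < v p * pi p :=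
    eventually_nhdsWithin_of_forall fun p hp => mul_pos (H.v_pos p hp) (hpos p hp)
  have hw_le : ∀ᶠ p in 𝓝[Ioo (0 : ℝ) 1] i,
      v p * pi p ≤ K * Cb * (|p - i| * -log |p - i|) := by
    filter_upwards [nhdsWithin_le_nhds hvK.bound, hbound, self_mem_nhdsWithin] with p hvp hpip hp
    rw [hvi, sub_zero, norm_eq_abs, norm_eq_abs] at hvp
    rw [one_div, log_inv] at hpip
    calc v p * pi p ≤ (K * |p - i|) * (Cb * -log |p - i|) :=
          mul_le_mul (le_of_abs_le hvp) hpip (hpos p hp).le (by positivity)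
      _ = K * Cb * (|p - i| * -log |p - i|) := by ring
  have hpsi : Tendsto psi (𝓝[Ioo (0 : ℝ) 1] i) (𝓝 (psi i)) :=
    (hpsi_cont i hi_mem).mono_left (nhdsWithin_mono _ Ioo_subset_Icc_self)
  rcases hi with rfl | rfl
  · rw [nhdsWithin_Ioo_eq_nhdsGT one_pos] at hw_pos hw_le hpsi hlim
    refine eq_zero_of_tendsto_mul_deriv_nhdsGT_zero (M := K * Cb) (by positivity) hw_pos ?_
      hpsi hlim
    filter_upwards [hw_le, self_mem_nhdsWithin] with p hp (hp0 : 0 < p)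
    rwa [sub_zero, abs_of_pos hp0] at hp
  · rw [nhdsWithin_Ioo_eq_nhdsLT one_pos] at hw_pos hw_le hpsi hlim
    refine eq_zero_of_tendsto_mul_deriv_nhdsLT (M := K * Cb) (by positivity) hw_pos ?_
      hpsi hlim
    filter_upwards [hw_le, self_mem_nhdsWithin] with p hp (hp1 : p < 1)
    rwa [abs_of_neg (sub_neg.2 hp1), neg_sub] at hp

/-- if `π` grows at most logarithmically near `i` and
`lim_{p→i} v(p)π(p)ψ'(p)` exists, then the limit is zero. -/
theorem stmt_16 (lam : ℝ) (v mu w0 : ℝ → ℝ)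
    (H : ModelAssumptions lam v mu w0)
    (i : ℝ) (hi : i = 0 ∨ i = 1)
    (pi : ℝ → ℝ) (hpos : ∀ p ∈ Ioo (0 : ℝ) 1, 0 < pi p)
    (Cb : ℝ) (hCb : 0 < Cb)
    (hbound : ∀ᶠ p in 𝓝[Ioo (0 : ℝ) 1] i, pi p ≤ Cb * Real.log (1 / |p - i|))
    (psi : ℝ → ℝ)
    (hpsi_cont : ContinuousOn psi (Icc (0 : ℝ) 1))
    (hpsi_C1 : ContDiffOn ℝ 1 psi (Ioo (0 : ℝ) 1))
    (L : ℝ)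
    (hlim : Tendsto (fun p => v p * pi p * deriv psi p) (𝓝[Ioo (0 : ℝ) 1] i) (𝓝 L)) :
    L = 0 :=
  stmt_16_general lam v mu w0 H i hi pi hpos Cb hCb hbound psi hpsi_cont L hlim
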